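/- arXiv:2509.23458 — 2 statements merged into one kernel-verified Lean document; each statement's English description precedes it below -/
import Mathlib

section
/- Let G = (V, E, w) be a weighted digraph with a laminar topological order (<_D, 𝒫), enumerate V as v₁ <_D v₂ <_D … <_D v_n, and let H be a 2-hop spanner with respect to this enumeration. Let D₁ be a weighted digraph on V that contains, for every (v_i, v_j) ∈ H with v_i ⇝_G v_j, the edge (v_i, v_j) with weight d_G(v_i, v_j), and let D₂ be a weighted digraph on V that contains, for every (v_i, v_j) ∈ H with v_j ⇝_G v_i, the edge (v_j, v_i) with weight d_G(v_j, v_i). Then for all s, t ∈ V, min(d_{D₁}(s,t), d_{D₂}(s,t)) ≤ 2·Δ_{s,t}; moreover, if s <_D t then d_{D₁}(s,t) ≤ 2·Δ_{s,t}, and if t <_D s then d_{D₂}(s,t) ≤ 2·Δ_{s,t}. -/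
open scoped ENNReal BigOperators

/-- A weighted digraph: edges `E` with no self-loops and positive real weights. -/
structure WDigraph (V : Type) where
  E : V → V → Prop
  no_self : ∀ v : V, ¬ E v v
  w : V → V → ℝ
  w_pos : ∀ u v : V, E u v → 0 < w u v

namespace WDigraph

variable {V : Type}

/-- `PathW G u v c`: there is a directed path from `u` to `v` in `G` of total weight `c`. -/
inductive PathW (G : WDigraph V) : V → V → ℝ → Prop
  | nil (u : V) : PathW G u u 0
  | cons {u x v : V} {c : ℝ} : G.E u x → PathW G x v c → PathW G u v (G.w u x + c)

/-- `u ⇝_G v`: there is a directed path from `u` to `v`. -/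
def Reach (G : WDigraph V) (u v : V) : Prop := Relation.ReflTransGen G.E u v

/-- The shortest-path quasimetric: infimum of path weights, `∞` if no path exists. -/
noncomputable def dist (G : WDigraph V) (u v : V) : ℝ≥0∞ :=
  ⨅ (c : ℝ) (_ : G.PathW u v c), ENNReal.ofReal c

/-- A DAG: no vertex has a nonempty directed path to itself. -/
def IsDAG (G : WDigraph V) : Prop := ∀ v : V, ¬ Relation.TransGen G.E v v

/-- Number of edges of the digraph. -/
noncomputable def edgeCount (G : WDigraph V) : ℕ := Nat.card {p : V × V // G.E p.1 p.2}

end WDigraph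

/-- A laminar topological order of a weighted digraph `G` over a linearly ordered vertex
set: a laminar family of clusters containing all singletons, each cluster being an
interval of the order and inducing a strongly connected subgraph. -/
structure LaminarTO {V : Type} [LinearOrder V] (G : WDigraph V) where
  P : Set (Set V)
  nonempty_mem : ∀ C ∈ P, C.Nonempty
  singleton_mem : ∀ v : V, ({v} : Set V) ∈ P
  laminar : ∀ C₁ ∈ P, ∀ C₂ ∈ P, C₁ ∩ C₂ = ∅ ∨ C₁ ⊆ C₂ ∨ C₂ ⊆ C₁
  interval : ∀ C ∈ P, ∀ u ∈ C, ∀ v ∈ C, ∀ x : V, u ≤ x → x ≤ v → x ∈ C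
  strongly_connected : ∀ C ∈ P, ∀ u ∈ C, ∀ v ∈ C,
    Relation.ReflTransGen (fun a b => G.E a b ∧ a ∈ C ∧ b ∈ C) u v

/-- The weak diameter `Δ_C` of a cluster `C`. -/
noncomputable def clusterDiam {V : Type} (G : WDigraph V) (C : Set V) : ℝ≥0∞ :=
  ⨆ x ∈ C, ⨆ y ∈ C, G.dist x y

/-- `Δ_{s,t}`: the weak diameter of the inclusion-minimal cluster of the laminar family
containing both `s` and `t` (by laminarity and monotonicity of the diameter this equals
the infimum below), and `∞` if no cluster contains both. -/
noncomputable def pairDiam {V : Type} [LinearOrder V] {G : WDigraph V}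
    (LP : LaminarTO G) (s t : V) : ℝ≥0∞ :=
  ⨅ (C : Set V) (_ : C ∈ LP.P) (_ : s ∈ C) (_ : t ∈ C), clusterDiam G C

/-- A 2-hop spanner of the linearly ordered vertex set: for every `u < v`, either
`(u,v) ∈ H` or some `x` with `u < x < v` satisfies `(u,x) ∈ H` and `(x,v) ∈ H`. -/
def TwoHopSpanner {V : Type} [LinearOrder V] (H : Set (V × V)) : Prop :=
  (∀ p ∈ H, p.1 < p.2) ∧
  ∀ u v : V, u < v → ((u, v) ∈ H ∨ ∃ x : V, u < x ∧ x < v ∧ (u, x) ∈ H ∧ (x, v) ∈ H)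

/-!
If `s < t` lie in a cluster `C`, the 2-hop spanner gives a `D₁`-path from `s` to `t` with at
most two edges, the middle vertex `x` lying between `s` and `t` and hence in the interval `C`.
Since `C` is strongly connected, each of these edges exists and weighs a `G`-distance between
two vertices of `C`, that is at most `Δ_C`. The backward bound for `D₂` is the forward one for
the reversed order, with the swapped spanner and the same clusters.
-/

namespace WDigraph

variable {V : Type}

theorem PathW.append {G : WDigraph V} {u v w : V} {c c' : ℝ}
    (h : G.PathW u v c) (h' : G.PathW v w c') : G.PathW u w (c + c') := by
  induction h with
  | nil => simpa using h'
  | cons he _ ih => simpa only [add_assoc] using PathW.cons he (ih h')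

theorem dist_le_of_pathW (G : WDigraph V) {u v : V} {c : ℝ} (h : G.PathW u v c) :
    G.dist u v ≤ ENNReal.ofReal c :=
  iInf₂_le c h

theorem dist_self (G : WDigraph V) (u : V) : G.dist u u = 0 := by
  simpa using G.dist_le_of_pathW (PathW.nil u)

theorem dist_le_weight (G : WDigraph V) {u v : V} (h : G.E u v) :
    G.dist u v ≤ ENNReal.ofReal (G.w u v) := by
  simpa using G.dist_le_of_pathW (PathW.cons h (PathW.nil v))

theorem dist_triangle (G : WDigraph V) (u v w : V) :
    G.dist u w ≤ G.dist u v + G.dist v w := by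
  simp only [dist, ENNReal.iInf_add, ENNReal.add_iInf]
  refine le_iInf₂ fun c' hc' => le_iInf₂ fun c hc => ?_
  exact (G.dist_le_of_pathW (hc.append hc')).trans ENNReal.ofReal_add_le

theorem dist_le_clusterDiam (G : WDigraph V) {C : Set V} {u v : V}
    (hu : u ∈ C) (hv : v ∈ C) : G.dist u v ≤ clusterDiam G C :=
  le_trans (le_biSup _ hv) (le_biSup (fun x => ⨆ y ∈ C, G.dist x y) hu)

def ContainsShortcuts (D G : WDigraph V) (H : Set (V × V)) : Prop :=
  ∀ p ∈ H, G.Reach p.1 p.2 → D.E p.1 p.2 ∧ ENNReal.ofReal (D.w p.1 p.2) = G.dist p.1 p.2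

theorem ContainsShortcuts.dist_le {D G : WDigraph V} {H : Set (V × V)}
    (hD : D.ContainsShortcuts G H) {u v : V} (huv : (u, v) ∈ H) (hr : G.Reach u v) :
    D.dist u v ≤ G.dist u v := by
  obtain ⟨hE, hw⟩ := hD (u, v) huv hr
  exact (D.dist_le_weight hE).trans_eq hw

end WDigraph

theorem TwoHopSpanner.dual {V : Type} [LinearOrder V] {H : Set (V × V)}
    (hH : TwoHopSpanner H) : TwoHopSpanner (V := Vᵒᵈ) (Prod.swap '' H) := by
  refine ⟨fun _ ⟨q, hq, hqp⟩ => hqp ▸ hH.1 q hq, fun u v huv => ?_⟩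
  rcases hH.2 v u huv with hvu | ⟨x, hvx, hxu, hv, hu⟩
  · exact Or.inl ⟨(v, u), hvu, rfl⟩
  · exact Or.inr ⟨x, hxu, hvx, ⟨(x, u), hu, rfl⟩, ⟨(v, x), hv, rfl⟩⟩

namespace LaminarTO

variable {V : Type} [LinearOrder V] {G : WDigraph V} (LP : LaminarTO G)

def dual : LaminarTO (V := Vᵒᵈ) G where
  P := LP.P
  nonempty_mem := LP.nonempty_mem
  singleton_mem := LP.singleton_mem
  laminar := LP.laminar
  interval C hC u hu v hv x hux hxv := LP.interval C hC v hv u hu x hxv hux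
  strongly_connected := LP.strongly_connected

theorem reach_of_mem {C : Set V} (hC : C ∈ LP.P) {u v : V} (hu : u ∈ C) (hv : v ∈ C) :
    G.Reach u v :=
  Relation.ReflTransGen.mono (fun _ _ h => h.1) u v (LP.strongly_connected C hC u hu v hv)

theorem dist_le_two_mul_clusterDiam {H : Set (V × V)} (hH : TwoHopSpanner H)
    {D : WDigraph V} (hD : D.ContainsShortcuts G H) {C : Set V} (hC : C ∈ LP.P)
    {s t : V} (hs : s ∈ C) (ht : t ∈ C) (hst : s < t) :
    D.dist s t ≤ 2 * clusterDiam G C := by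
  rcases hH.2 s t hst with hedge | ⟨x, hsx, hxt, hsx_mem, hxt_mem⟩
  · calc D.dist s t ≤ G.dist s t := hD.dist_le hedge (LP.reach_of_mem hC hs ht)
      _ ≤ clusterDiam G C := G.dist_le_clusterDiam hs ht
      _ ≤ 2 * clusterDiam G C := by rw [two_mul]; exact le_add_self
  · have hx : x ∈ C := LP.interval C hC s hs t ht x hsx.le hxt.le
    calc D.dist s t ≤ D.dist s x + D.dist x t := D.dist_triangle s x t
      _ ≤ G.dist s x + G.dist x t :=
          add_le_add (hD.dist_le hsx_mem (LP.reach_of_mem hC hs hx))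
            (hD.dist_le hxt_mem (LP.reach_of_mem hC hx ht))
      _ ≤ clusterDiam G C + clusterDiam G C :=
          add_le_add (G.dist_le_clusterDiam hs hx) (G.dist_le_clusterDiam hx ht)
      _ = 2 * clusterDiam G C := (two_mul _).symm

theorem dist_le_two_mul_pairDiam {H : Set (V × V)} (hH : TwoHopSpanner H)
    {D : WDigraph V} (hD : D.ContainsShortcuts G H) {s t : V} (hst : s < t) :
    D.dist s t ≤ 2 * pairDiam LP s t := by
  simp only [pairDiam, ENNReal.mul_iInf_of_ne two_ne_zero ENNReal.ofNat_ne_top]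
  exact le_iInf₂ fun C hC => le_iInf₂ fun hs ht =>
    LP.dist_le_two_mul_clusterDiam hH hD hC hs ht hst

end LaminarTO

theorem two_hop_spanner_distance_bound_general {V : Type} [LinearOrder V]
    (G : WDigraph V) (LP : LaminarTO G) (H : Set (V × V)) (hH : TwoHopSpanner H)
    (D₁ D₂ : WDigraph V)
    (hD₁ : ∀ p ∈ H, G.Reach p.1 p.2 →
      D₁.E p.1 p.2 ∧ ENNReal.ofReal (D₁.w p.1 p.2) = G.dist p.1 p.2)
    (hD₂ : ∀ p ∈ H, G.Reach p.2 p.1 →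
      D₂.E p.2 p.1 ∧ ENNReal.ofReal (D₂.w p.2 p.1) = G.dist p.2 p.1) :
    ∀ s t : V,
      min (D₁.dist s t) (D₂.dist s t) ≤ 2 * pairDiam LP s t ∧
      (s < t → D₁.dist s t ≤ 2 * pairDiam LP s t) ∧
      (t < s → D₂.dist s t ≤ 2 * pairDiam LP s t) := by
  intro s t
  have hD₂' : D₂.ContainsShortcuts G (Prod.swap '' H) := by
    rintro _ ⟨p, hp, rfl⟩
    exact hD₂ p hp
  have forward : s < t → D₁.dist s t ≤ 2 * pairDiam LP s t :=
    LP.dist_le_two_mul_pairDiam hH hD₁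
  have backward : t < s → D₂.dist s t ≤ 2 * pairDiam LP s t :=
    LP.dual.dist_le_two_mul_pairDiam hH.dual hD₂'
  refine ⟨?_, forward, backward⟩
  rcases lt_trichotomy s t with hst | rfl | hts
  · exact (min_le_left _ _).trans (forward hst)
  · simp [WDigraph.dist_self]
  · exact (min_le_right _ _).trans (backward hts)

/-- if `D₁` contains the forward 2-hop-spanner edges (for reachable pairs,
weighted by `d_G`), and `D₂` the backward ones, then for all `s,t`,
`min(d_{D₁}(s,t), d_{D₂}(s,t)) ≤ 2·Δ_{s,t}`; moreover `d_{D₁}(s,t) ≤ 2·Δ_{s,t}` when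
`s <_D t` and `d_{D₂}(s,t) ≤ 2·Δ_{s,t}` when `t <_D s`. -/
theorem two_hop_spanner_distance_bound {V : Type} [Fintype V] [LinearOrder V]
    (G : WDigraph V) (LP : LaminarTO G) (H : Set (V × V)) (hH : TwoHopSpanner H)
    (D₁ D₂ : WDigraph V)
    (hD₁ : ∀ p ∈ H, G.Reach p.1 p.2 →
      D₁.E p.1 p.2 ∧ ENNReal.ofReal (D₁.w p.1 p.2) = G.dist p.1 p.2)
    (hD₂ : ∀ p ∈ H, G.Reach p.2 p.1 →
      D₂.E p.2 p.1 ∧ ENNReal.ofReal (D₂.w p.2 p.1) = G.dist p.2 p.1) :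
    ∀ s t : V,
      min (D₁.dist s t) (D₂.dist s t) ≤ 2 * pairDiam LP s t ∧
      (s < t → D₁.dist s t ≤ 2 * pairDiam LP s t) ∧
      (t < s → D₂.dist s t ≤ 2 * pairDiam LP s t) :=
  two_hop_spanner_distance_bound_general G LP H hH D₁ D₂ hD₁ hD₂
end

section
/- Let G = (V, E, w) be a weighted digraph with a laminar topological order (<_D, 𝒫); enumerate V as v₁ <_D v₂ <_D … <_D v_n and let H be a 2-hop spanner with respect to this enumeration. Let D ⊆ E be a set of edges such that x <_D y for every (x, y) ∈ D. Let D₁ be the weighted digraph on V whose edges are: (a) all pairs (v_i, v_j) ∈ H with v_i ⇝_G v_j, and (b) for every (x, y) ∈ D and every pair of disjoint clusters C_x, C_y ∈ 𝒫 with x ∈ C_x and y ∈ C_y, the pair (C_x^last, C_y^first); every edge (a, b) of D₁ carries weight d_G(a, b). For s, t ∈ V define α(s, t) := d_{D₁}(s, t) if s = t or s <_D t, and α(s, t) := 3·Δ_{s,t} otherwise. Suppose s, t ∈ V, π is a directed path from s to t of total weight d_G(s, t), C_s, C_t ∈ 𝒫 are disjoint clusters, (u, v) is an edge of π with (u, v)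 ∈ D, the prefix of π from s to u is contained in C_s, and the suffix of π from v to t is contained in C_t. Then α(s, t) ≤ α(s, u) + d_G(u, v) + α(v, t). -/
open scoped ENNReal BigOperators

/-- `α(s,t) := d_{D₁}(s,t)` if `s = t` or `s <_D t`, and `α(s,t) := 3·Δ_{s,t}` otherwise. -/
noncomputable def alphaFn {V : Type} [LinearOrder V] {G : WDigraph V}
    (LP : LaminarTO G) (D₁ : WDigraph V) (s t : V) : ℝ≥0∞ :=
  if s ≤ t then D₁.dist s t else 3 * pairDiam LP s t

/-! Since the prefix of `π` lies in `C_s`, the suffix in `C_t`, and clusters are disjoint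
intervals, `s <_D t`, so `α(s,t) = d_{D₁}(s,t)`. For any clusters `C' ∋ u` inside `C_s` and
`C'' ∋ v` inside `C_t`, the edge `(C'^last, C''^first)` of `D₁` gives
`d_{D₁}(s,t) ≤ d_{D₁}(s, C'^last) + Δ_{C'} + d_G(u,v) + Δ_{C''} + d_{D₁}(C''^first, t)`.
Choosing `C' = {u}` recovers `α(s,u) = d_{D₁}(s,u)` when `s ≤ u`; otherwise, for a cluster
`C ∋ s, u`, laminarity makes `C ∩ C_s` a cluster, and the 2-hop spanner inside it bounds
`d_{D₁}(s, C'^last) + Δ_{C'}` by `3 Δ_C`. The suffix side is symmetric. -/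

namespace WDigraph

variable {V : Type} {G : WDigraph V} {x y z : V}

lemma PathW.append_s9 {c₁ c₂ : ℝ} (h₁ : G.PathW x y c₁) (h₂ : G.PathW y z c₂) :
    G.PathW x z (c₁ + c₂) := by
  induction h₁ with
  | nil => simpa using h₂
  | cons he _ ih => rw [add_assoc]; exact .cons he (ih h₂)

lemma dist_le_ofReal {c : ℝ} (h : G.PathW x y c) : G.dist x y ≤ ENNReal.ofReal c :=
  iInf₂_le c h

lemma dist_le_of_adj (h : G.E x y) : G.dist x y ≤ ENNReal.ofReal (G.w x y) := by
  simpa using dist_le_ofReal (.cons h (.nil y))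

@[simp]
lemma dist_self_s9 (x : V) : G.dist x x = 0 :=
  nonpos_iff_eq_zero.1 (by simpa using dist_le_ofReal (.nil (G := G) x))

lemma dist_triangle_s9 (x y z : V) : G.dist x z ≤ G.dist x y + G.dist y z := by
  simp only [dist, ENNReal.iInf_add, ENNReal.add_iInf]
  exact le_iInf₂ fun _ h₂ => le_iInf₂ fun _ h₁ =>
    (dist_le_ofReal (h₁.append_s9 h₂)).trans ENNReal.ofReal_add_le

lemma dist_triangle₃ (a x y b : V) :
    G.dist a b ≤ G.dist a x + G.dist x y + G.dist y b :=
  (G.dist_triangle_s9 a y b).trans (by gcongr; exact G.dist_triangle_s9 a x y)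

end WDigraph

section Clusters

variable {V : Type} {G : WDigraph V}

lemma dist_le_clusterDiam {C : Set V} {x y : V} (hx : x ∈ C) (hy : y ∈ C) :
    G.dist x y ≤ clusterDiam G C :=
  le_iSup₂_of_le x hx (le_iSup₂_of_le y hy le_rfl)

lemma clusterDiam_mono {C₁ C₂ : Set V} (h : C₁ ⊆ C₂) :
    clusterDiam G C₁ ≤ clusterDiam G C₂ :=
  iSup₂_le fun _ hx => iSup₂_le fun _ hy => dist_le_clusterDiam (h hx) (h hy)

@[simp]
lemma clusterDiam_singleton (x : V) : clusterDiam G {x} = 0 := by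
  simp [clusterDiam]

lemma dist_le_clusterDiam_add_dist_add_clusterDiam {C C' : Set V} {a x y b : V}
    (ha : a ∈ C) (hx : x ∈ C) (hy : y ∈ C') (hb : b ∈ C') :
    G.dist a b ≤ clusterDiam G C + G.dist x y + clusterDiam G C' :=
  (G.dist_triangle₃ a x y b).trans <| by
    gcongr
    exacts [dist_le_clusterDiam ha hx, dist_le_clusterDiam hy hb]

end Clusters

lemma Set.OrdConnected.lt_of_disjoint {α : Type*} [LinearOrder α] {A B : Set α} {a b x y : α}
    (hA : A.OrdConnected) (hB : B.OrdConnected) (hAB : Disjoint A B)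
    (ha : a ∈ A) (hb : b ∈ B) (hab : a < b) (hx : x ∈ A) (hy : y ∈ B) : x < y := by
  by_contra! hyx
  rcases le_or_gt y a with hya | hay
  · exact hAB.notMem_of_mem_left ha (hB.out hy hb ⟨hya, hab.le⟩)
  · exact hAB.notMem_of_mem_left (hA.out ha hx ⟨hay.le, hyx⟩) hy

namespace LaminarTO

variable {V : Type} [LinearOrder V] {G : WDigraph V} (LP : LaminarTO G) {C K : Set V}

lemma ordConnected (hC : C ∈ LP.P) : C.OrdConnected :=
  ⟨fun x hx y hy z hz => LP.interval C hC x hx y hy z hz.1 hz.2⟩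

lemma reach (hC : C ∈ LP.P) {x y : V} (hx : x ∈ C) (hy : y ∈ C) : G.Reach x y :=
  Relation.ReflTransGen.mono (fun _ _ h => h.1) x y (LP.strongly_connected C hC x hx y hy)

lemma inter_mem (hC : C ∈ LP.P) (hK : K ∈ LP.P) (hCK : (C ∩ K).Nonempty) :
    C ∩ K ∈ LP.P := by
  rcases LP.laminar C hC K hK with h | h | h
  · exact absurd h hCK.ne_empty
  · rwa [Set.inter_eq_left.2 h]
  · rwa [Set.inter_eq_right.2 h]

lemma le_mul_pairDiam {k c : ℝ≥0∞} (hk₀ : k ≠ 0) (hk : k ≠ ⊤) {s t : V}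
    (h : ∀ C ∈ LP.P, s ∈ C → t ∈ C → c ≤ k * clusterDiam G C) :
    c ≤ k * pairDiam LP s t := by
  simp only [pairDiam, ENNReal.mul_iInf_of_ne hk₀ hk]
  exact le_iInf₂ fun C hC => le_iInf₂ fun hs ht => h C hC hs ht

end LaminarTO

section Alpha

variable {V : Type} [LinearOrder V] {G D₁ : WDigraph V} {LP : LaminarTO G} {H : Set (V × V)}
  {fst lst : Set V → V} {C K : Set V} {s t u v x y : V}

lemma dist_le_clusterDiam_of_mem_spanner
    (hHE : ∀ a b, (a, b) ∈ H → G.Reach a b → D₁.E a b)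
    (hdom : ∀ a b, D₁.E a b → D₁.dist a b ≤ G.dist a b)
    (hC : C ∈ LP.P) (hx : x ∈ C) (hy : y ∈ C) (hxy : (x, y) ∈ H) :
    D₁.dist x y ≤ clusterDiam G C :=
  (hdom x y (hHE x y hxy (LP.reach hC hx hy))).trans (dist_le_clusterDiam hx hy)

lemma dist_le_two_mul_clusterDiam (hH : TwoHopSpanner H)
    (hHE : ∀ a b, (a, b) ∈ H → G.Reach a b → D₁.E a b)
    (hdom : ∀ a b, D₁.E a b → D₁.dist a b ≤ G.dist a b)
    (hC : C ∈ LP.P) (hx : x ∈ C) (hy : y ∈ C) (hxy : x ≤ y) :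
    D₁.dist x y ≤ 2 * clusterDiam G C := by
  have hspan : ∀ {a b}, a ∈ C → b ∈ C → (a, b) ∈ H →
      D₁.dist a b ≤ clusterDiam G C :=
    dist_le_clusterDiam_of_mem_spanner hHE hdom hC
  rcases hxy.eq_or_lt with rfl | hlt
  · simp
  rcases hH.2 x y hlt with hxyH | ⟨m, hxm, hmy, hxmH, hmyH⟩
  · exact (hspan hx hy hxyH).trans (by rw [two_mul]; exact le_self_add)
  · have hm : m ∈ C := LP.ordConnected hC |>.out hx hy ⟨hxm.le, hmy.le⟩
    calc D₁.dist x y ≤ D₁.dist x m + D₁.dist m y := D₁.dist_triangle_s9 x m y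
      _ ≤ clusterDiam G C + clusterDiam G C := add_le_add (hspan hx hm hxmH) (hspan hm hy hmyH)
      _ = 2 * clusterDiam G C := (two_mul _).symm

lemma dist_le_iInf_add_dist_add_iInf
    (hdom : ∀ a b, D₁.E a b → D₁.dist a b ≤ G.dist a b)
    (hfst : ∀ C ∈ LP.P, fst C ∈ C) (hlst : ∀ C ∈ LP.P, lst C ∈ C)
    (hcross : ∀ C' ∈ LP.P, ∀ C'' ∈ LP.P, Disjoint C' C'' → u ∈ C' → v ∈ C'' →
      D₁.E (lst C') (fst C''))
    {Cs Ct : Set V} (hdisj : Disjoint Cs Ct) :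
    D₁.dist s t ≤
      (⨅ C : {C // C ∈ LP.P ∧ u ∈ C ∧ C ⊆ Cs}, D₁.dist s (lst C) + clusterDiam G C) +
        G.dist u v +
          ⨅ C : {C // C ∈ LP.P ∧ v ∈ C ∧ C ⊆ Ct}, clusterDiam G C + D₁.dist (fst C) t := by
  rw [ENNReal.iInf_add]
  refine ENNReal.le_iInf_add_iInf fun ⟨C', hC', hu, hCs⟩ ⟨C'', hC'', hv, hCt⟩ => ?_
  have hmid :
      D₁.dist (lst C') (fst C'') ≤ clusterDiam G C' + G.dist u v + clusterDiam G C'' :=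
    (hdom _ _ (hcross C' hC' C'' hC'' (hdisj.mono hCs hCt) hu hv)).trans
      (dist_le_clusterDiam_add_dist_add_clusterDiam (hlst C' hC') hu hv (hfst C'' hC''))
  calc D₁.dist s t
      ≤ D₁.dist s (lst C') + D₁.dist (lst C') (fst C'') + D₁.dist (fst C'') t :=
        D₁.dist_triangle₃ _ _ _ _
    _ ≤ D₁.dist s (lst C') + (clusterDiam G C' + G.dist u v + clusterDiam G C'') +
        D₁.dist (fst C'') t := by gcongr
    _ = _ := by ring

lemma iInf_exit_le_alphaFn (hH : TwoHopSpanner H)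
    (hHE : ∀ a b, (a, b) ∈ H → G.Reach a b → D₁.E a b)
    (hdom : ∀ a b, D₁.E a b → D₁.dist a b ≤ G.dist a b)
    (hlst : ∀ C ∈ LP.P, lst C ∈ C ∧ ∀ x ∈ C, x ≤ lst C)
    (hK : K ∈ LP.P) (hs : s ∈ K) (hu : u ∈ K) :
    ⨅ C : {C // C ∈ LP.P ∧ u ∈ C ∧ C ⊆ K}, D₁.dist s (lst C) + clusterDiam G C ≤
      alphaFn LP D₁ s u := by
  unfold alphaFn
  split_ifs with hsu
  · refine iInf_le_of_le ⟨{u}, LP.singleton_mem u, rfl, Set.singleton_subset_iff.2 hu⟩ ?_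
    simp [Set.mem_singleton_iff.1 (hlst _ (LP.singleton_mem u)).1]
  refine LP.le_mul_pairDiam (by norm_num) (by norm_num) fun C hC hsC huC => ?_
  have hCK := LP.inter_mem hC hK ⟨s, hsC, hs⟩
  obtain ⟨hlst_mem, hlst_max⟩ := hlst _ hCK
  refine iInf_le_of_le ⟨C ∩ K, hCK, ⟨huC, hu⟩, Set.inter_subset_right⟩ ?_
  calc D₁.dist s (lst (C ∩ K)) + clusterDiam G (C ∩ K)
      ≤ 2 * clusterDiam G (C ∩ K) + clusterDiam G (C ∩ K) := by
        gcongr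
        exact dist_le_two_mul_clusterDiam hH hHE hdom hCK ⟨hsC, hs⟩ hlst_mem
          (hlst_max s ⟨hsC, hs⟩)
    _ = 3 * clusterDiam G (C ∩ K) := by ring
    _ ≤ 3 * clusterDiam G C := by gcongr; exact clusterDiam_mono Set.inter_subset_left

lemma iInf_entry_le_alphaFn (hH : TwoHopSpanner H)
    (hHE : ∀ a b, (a, b) ∈ H → G.Reach a b → D₁.E a b)
    (hdom : ∀ a b, D₁.E a b → D₁.dist a b ≤ G.dist a b)
    (hfst : ∀ C ∈ LP.P, fst C ∈ C ∧ ∀ x ∈ C, fst C ≤ x)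
    (hK : K ∈ LP.P) (hv : v ∈ K) (ht : t ∈ K) :
    ⨅ C : {C // C ∈ LP.P ∧ v ∈ C ∧ C ⊆ K}, clusterDiam G C + D₁.dist (fst C) t ≤
      alphaFn LP D₁ v t := by
  unfold alphaFn
  split_ifs with hvt
  · refine iInf_le_of_le ⟨{v}, LP.singleton_mem v, rfl, Set.singleton_subset_iff.2 hv⟩ ?_
    simp [Set.mem_singleton_iff.1 (hfst _ (LP.singleton_mem v)).1]
  refine LP.le_mul_pairDiam (by norm_num) (by norm_num) fun C hC hvC htC => ?_
  have hCK := LP.inter_mem hC hK ⟨t, htC, ht⟩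
  obtain ⟨hfst_mem, hfst_min⟩ := hfst _ hCK
  refine iInf_le_of_le ⟨C ∩ K, hCK, ⟨hvC, hv⟩, Set.inter_subset_right⟩ ?_
  calc clusterDiam G (C ∩ K) + D₁.dist (fst (C ∩ K)) t
      ≤ clusterDiam G (C ∩ K) + 2 * clusterDiam G (C ∩ K) := by
        gcongr
        exact dist_le_two_mul_clusterDiam hH hHE hdom hCK hfst_mem ⟨htC, ht⟩
          (hfst_min t ⟨htC, ht⟩)
    _ = 3 * clusterDiam G (C ∩ K) := by ring
    _ ≤ 3 * clusterDiam G C := by gcongr; exact clusterDiam_mono Set.inter_subset_left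

end Alpha

theorem alpha_triangle_general {V : Type} [LinearOrder V]
    (G : WDigraph V) (LP : LaminarTO G) (H : Set (V × V)) (hH : TwoHopSpanner H)
    (D : Set (V × V)) (hD : ∀ p ∈ D, G.E p.1 p.2 ∧ p.1 < p.2)
    (fst lst : Set V → V)
    (hfst : ∀ C ∈ LP.P, fst C ∈ C ∧ ∀ x ∈ C, fst C ≤ x)
    (hlst : ∀ C ∈ LP.P, lst C ∈ C ∧ ∀ x ∈ C, x ≤ lst C)
    (D₁ : WDigraph V)
    (hE : ∀ a b : V, D₁.E a b ↔
      (((a, b) ∈ H ∧ G.Reach a b) ∨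
        ∃ x y : V, ∃ Cx Cy : Set V, (x, y) ∈ D ∧ Cx ∈ LP.P ∧ Cy ∈ LP.P ∧
          Disjoint Cx Cy ∧ x ∈ Cx ∧ y ∈ Cy ∧ a = lst Cx ∧ b = fst Cy))
    (hw : ∀ a b : V, D₁.E a b → ENNReal.ofReal (D₁.w a b) = G.dist a b)
    (s t u v : V) (Cs Ct : Set V) (hCs : Cs ∈ LP.P) (hCt : Ct ∈ LP.P)
    (hdisj : Disjoint Cs Ct)
    (q : ℕ) (z : ℕ → V) (hz0 : z 0 = s) (hzq : z q = t)
    (j : ℕ) (hj : j < q) (hu : z j = u) (hv : z (j + 1) = v)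
    (huv : (u, v) ∈ D)
    (hpre : ∀ i, i ≤ j → z i ∈ Cs)
    (hsuf : ∀ i, j + 1 ≤ i → i ≤ q → z i ∈ Ct) :
    alphaFn LP D₁ s t ≤ alphaFn LP D₁ s u + G.dist u v + alphaFn LP D₁ v t := by
  have hsCs : s ∈ Cs := hz0 ▸ hpre 0 j.zero_le
  have huCs : u ∈ Cs := hu ▸ hpre j le_rfl
  have hvCt : v ∈ Ct := hv ▸ hsuf (j + 1) le_rfl hj
  have htCt : t ∈ Ct := hzq ▸ hsuf q hj le_rfl
  have hst : s < t := (LP.ordConnected hCs).lt_of_disjoint (LP.ordConnected hCt) hdisj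
    huCs hvCt (hD _ huv).2 hsCs htCt
  have hdom (a b : V) (hab : D₁.E a b) : D₁.dist a b ≤ G.dist a b :=
    (D₁.dist_le_of_adj hab).trans_eq (hw a b hab)
  have hHE (a b : V) (hab : (a, b) ∈ H) (hr : G.Reach a b) : D₁.E a b :=
    (hE a b).2 (.inl ⟨hab, hr⟩)
  have hcross : ∀ C' ∈ LP.P, ∀ C'' ∈ LP.P, Disjoint C' C'' → u ∈ C' → v ∈ C'' →
      D₁.E (lst C') (fst C'') := fun C' hC' C'' hC'' hd huC' hvC'' =>
    (hE _ _).2 (.inr ⟨u, v, C', C'', huv, hC', hC'', hd, huC', hvC'', rfl, rfl⟩)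
  rw [alphaFn, if_pos hst.le]
  exact (dist_le_iInf_add_dist_add_iInf hdom (fun C hC => (hfst C hC).1)
    (fun C hC => (hlst C hC).1) hcross hdisj).trans <|
    add_le_add (add_le_add_left (iInf_exit_le_alphaFn hH hHE hdom hlst hCs hsCs huCs) _)
      (iInf_entry_le_alphaFn hH hHE hdom hfst hCt hvCt htCt)

/-- triangle-type inequality for `α`.  Here `D₁` has exactly the edges
(a) of the 2-hop spanner `H` between reachable pairs, and (b) the edges
`(C_x^last, C_y^first)` for every `(x,y) ∈ D` and disjoint clusters `C_x ∋ x`, `C_y ∋ y`;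
each edge `(a,b)` of `D₁` carries weight `d_G(a,b)`.  If a shortest `s`–`t` path `π`
(of total weight `d_G(s,t)`) has an edge `(u,v) ∈ D` with the prefix `π[s,u]` inside a
cluster `C_s` and the suffix `π[v,t]` inside a cluster `C_t`, `C_s` and `C_t` disjoint,
then `α(s,t) ≤ α(s,u) + d_G(u,v) + α(v,t)`. -/
theorem alpha_triangle {V : Type} [Fintype V] [LinearOrder V]
    (G : WDigraph V) (LP : LaminarTO G) (H : Set (V × V)) (hH : TwoHopSpanner H)
    (D : Set (V × V)) (hD : ∀ p ∈ D, G.E p.1 p.2 ∧ p.1 < p.2)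
    (fst lst : Set V → V)
    (hfst : ∀ C ∈ LP.P, fst C ∈ C ∧ ∀ x ∈ C, fst C ≤ x)
    (hlst : ∀ C ∈ LP.P, lst C ∈ C ∧ ∀ x ∈ C, x ≤ lst C)
    (D₁ : WDigraph V)
    (hE : ∀ a b : V, D₁.E a b ↔
      (((a, b) ∈ H ∧ G.Reach a b) ∨
        ∃ x y : V, ∃ Cx Cy : Set V, (x, y) ∈ D ∧ Cx ∈ LP.P ∧ Cy ∈ LP.P ∧
          Disjoint Cx Cy ∧ x ∈ Cx ∧ y ∈ Cy ∧ a = lst Cx ∧ b = fst Cy))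
    (hw : ∀ a b : V, D₁.E a b → ENNReal.ofReal (D₁.w a b) = G.dist a b)
    (s t u v : V) (Cs Ct : Set V) (hCs : Cs ∈ LP.P) (hCt : Ct ∈ LP.P)
    (hdisj : Disjoint Cs Ct)
    (q : ℕ) (z : ℕ → V) (hz0 : z 0 = s) (hzq : z q = t)
    (hedges : ∀ i, i < q → G.E (z i) (z (i + 1)))
    (hweight : ENNReal.ofReal (∑ i ∈ Finset.range q, G.w (z i) (z (i + 1))) = G.dist s t)
    (j : ℕ) (hj : j < q) (hu : z j = u) (hv : z (j + 1) = v)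
    (huv : (u, v) ∈ D)
    (hpre : ∀ i, i ≤ j → z i ∈ Cs)
    (hsuf : ∀ i, j + 1 ≤ i → i ≤ q → z i ∈ Ct) :
    alphaFn LP D₁ s t ≤ alphaFn LP D₁ s u + G.dist u v + alphaFn LP D₁ v t :=
  alpha_triangle_general G LP H hH D hD fst lst hfst hlst D₁ hE hw s t u v Cs Ct hCs hCt hdisj q z
    hz0 hzq j hj hu hv huv hpre hsuf
end
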